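/- Suppose the probabilities P_Ω satisfy the Shearer criterion and every bad event has P_Ω(B) > 0. Then m ≤ W' ≤ Σ_{B∈𝓑} μ(B)/P_Ω(B), where m is the number of bad events. -/

import Mathlib

/-!
The lower bound holds termwise: the one-node witness DAG labeled `b` lies in `Γ(b)` and has
weight `P b`.

For the upper bound, layer a single-sink witness DAG by depth (the length of a longest path
from a node). The layers form a stable set sequence `{b} = I₀, I₁, …`: each `I_{j+1}` is a
nonempty independent subset of the closed neighbourhood of `I_j`. The layer sequence determines
the DAG up to isomorphism and has the same weight, so `Σ_{τ ∈ Γ(b)} w(τ)` is at most the total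
weight of stable set sequences starting at `{b}`. Expanding the definition of `Q` gives
`Q(I) = P(I) Σ_J Q(J)`, the sum running over the independent `J` inside the closed
neighbourhood of an independent `I`; that is, `μ(I) = P(I) (1 + Σ_{J ≠ ∅} μ(J))`. Since `μ ≥ 0`
on independent sets by Shearer's criterion, induction on the length shows that the stable set
sequences of bounded length starting at `I` have total weight at most `μ(I)`.
-/

open scoped BigOperators ENNReal Classical

namespace LLL

/-- Two bad events are dependent iff their variable sets intersect. -/
def Dep {n : ℕ} {E : Type} (S : E → Finset (Fin n)) (b b' : E) : Prop :=
  (S b ∩ S b').Nonempty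

/-- A witness DAG: a finite DAG with nodes labeled by bad events, where any two
nodes with dependent labels are joined by an edge (in one direction), and nodes
with non-dependent labels have no edge. -/
structure WDag (n : ℕ) (E : Type) (S : E → Finset (Fin n)) where
  size : ℕ
  label : Fin size → E
  edge : Fin size → Fin size → Prop
  acyclic : ∀ v, ¬ Relation.TransGen edge v v
  edge_dep : ∀ v w, edge v w → Dep S (label v) (label w)
  dep_edge : ∀ v w, v ≠ w → Dep S (label v) (label w) → edge v w ∨ edge w v

namespace WDag

variable {n : ℕ} {E : Type} {S : E → Finset (Fin n)}

/-- Isomorphism of witness DAGs. -/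
def Iso (G G' : WDag n E S) : Prop :=
  ∃ e : Fin G.size ≃ Fin G'.size,
    (∀ v, G'.label (e v) = G.label v) ∧ ∀ v w, G'.edge (e v) (e w) ↔ G.edge v w

theorem Iso.refl (G : WDag n E S) : Iso G G :=
  ⟨Equiv.refl _, fun _ => rfl, fun _ _ => Iff.rfl⟩

theorem Iso.symm {G G' : WDag n E S} (h : Iso G G') : Iso G' G := by
  obtain ⟨e, hl, he⟩ := h
  refine ⟨e.symm, fun v => ?_, fun v w => ?_⟩
  · simpa using (hl (e.symm v)).symm
  · simpa using (he (e.symm v) (e.symm w)).symm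

theorem Iso.trans {G₁ G₂ G₃ : WDag n E S} (h12 : Iso G₁ G₂) (h23 : Iso G₂ G₃) :
    Iso G₁ G₃ := by
  obtain ⟨e, hl, he⟩ := h12
  obtain ⟨f, hl', he'⟩ := h23
  refine ⟨e.trans f, fun v => ?_, fun v w => ?_⟩
  · rw [Equiv.trans_apply, hl' (e v), hl v]
  · rw [Equiv.trans_apply, Equiv.trans_apply, he' (e v) (e w), he v w]

instance wdSetoid (n : ℕ) (E : Type) (S : E → Finset (Fin n)) : Setoid (WDag n E S) :=
  ⟨Iso, ⟨Iso.refl, Iso.symm, Iso.trans⟩⟩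

/-- Isomorphism classes of witness DAGs. -/
def WClass (n : ℕ) (E : Type) (S : E → Finset (Fin n)) : Type :=
  Quotient (wdSetoid n E S)

/-- The weight of a witness DAG: the product of the probabilities of its labels. -/
noncomputable def wt (P : E → ℝ) (G : WDag n E S) : ℝ := ∏ v, P (G.label v)

theorem wt_invariant (P : E → ℝ) {G G' : WDag n E S} (h : Iso G G') :
    wt P G = wt P G' := by
  obtain ⟨e, hl, _⟩ := h
  exact Fintype.prod_equiv e (fun v => P (G.label v)) (fun v => P (G'.label v))
    (fun v => by show P (G.label v) = P (G'.label (e v)); rw [hl v])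

/-- The weight, as a function on isomorphism classes. -/
noncomputable def cwt (P : E → ℝ) : WClass n E S → ℝ :=
  Quotient.lift (wt P) fun _ _ h => wt_invariant P h

theorem size_invariant {G G' : WDag n E S} (h : Iso G G') : G.size = G'.size := by
  obtain ⟨e, -, -⟩ := h
  simpa using Fintype.card_congr e

/-- The adjusted weight `a_ρ(G) = w(G) (1+ρ)^{|G|}`. -/
noncomputable def awt (P : E → ℝ) (ρ : ℝ) (G : WDag n E S) : ℝ :=
  wt P G * (1 + ρ) ^ G.size

theorem awt_invariant (P : E → ℝ) (ρ : ℝ) {G G' : WDag n E S} (h : Iso G G') :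
    awt P ρ G = awt P ρ G' := by
  unfold awt
  rw [wt_invariant P h, size_invariant h]

/-- The adjusted weight, as a function on isomorphism classes. -/
noncomputable def cawt (P : E → ℝ) (ρ : ℝ) : WClass n E S → ℝ :=
  Quotient.lift (awt P ρ) fun _ _ h => awt_invariant P ρ h

/-- A node is a sink if it has no outgoing edge. -/
def IsSink (G : WDag n E S) (v : Fin G.size) : Prop := ∀ w, ¬ G.edge v w

/-- A witness DAG has a single sink. -/
def SingleSink (G : WDag n E S) : Prop := ∃! v, IsSink G v

/-- A witness DAG has a single sink, labeled by `b`. -/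
def SinkLabeled (G : WDag n E S) (b : E) : Prop :=
  ∃ v, IsSink G v ∧ G.label v = b ∧ ∀ w, IsSink G w → w = v

end WDag

/-- A set of bad events is independent if no two distinct members are dependent. -/
def Indep {n : ℕ} {E : Type} (S : E → Finset (Fin n)) (I : Finset E) : Prop :=
  ∀ b ∈ I, ∀ b' ∈ I, b ≠ b' → ¬ Dep S b b'

/-- The independent-set polynomial `Q(I,p)`. -/
noncomputable def Q {n : ℕ} {E : Type} [Fintype E] (S : E → Finset (Fin n))
    (p : E → ℝ) (I : Finset E) : ℝ :=
  ∑ J ∈ Finset.univ.filter (fun J : Finset E => I ⊆ J ∧ Indep S J),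
    (-1 : ℝ) ^ (J.card - I.card) * ∏ b ∈ J, p b

/-- The Shearer criterion for the probability vector `p`. -/
def Shearer {n : ℕ} {E : Type} [Fintype E] (S : E → Finset (Fin n)) (p : E → ℝ) : Prop :=
  0 < Q S p ∅ ∧ ∀ I : Finset E, Indep S I → 0 ≤ Q S p I

variable {n : ℕ} {E : Type} {S : E → Finset (Fin n)}

theorem Dep.symm {a b : E} (h : Dep S a b) : Dep S b a := by
  rwa [Dep, Finset.inter_comm]

theorem Indep.mono {I J : Finset E} (hJ : Indep S J) (hIJ : I ⊆ J) : Indep S I :=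
  fun a ha b hb hab => hJ a (hIJ ha) b (hIJ hb) hab

theorem indep_empty : Indep S ∅ := by
  simp [Indep]

theorem indep_singleton (b : E) : Indep S {b} := by
  simp [Indep]

theorem sum_powerset_neg_one_pow_sub_card {α : Type*} {L M : Finset α} (hML : M ⊆ L) :
    ∑ J ∈ M.powerset, (-1 : ℝ) ^ (L.card - J.card) = if M = ∅ then (-1) ^ L.card else 0 := by
  have hsign : ∀ J ∈ M.powerset, (-1 : ℝ) ^ (L.card - J.card) = (-1) ^ L.card * (-1) ^ J.card :=
    fun J hJ => by
      have hJL : J.card ≤ L.card := Finset.card_le_card ((Finset.mem_powerset.1 hJ).trans hML)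
      rw [← Nat.sub_add_cancel hJL, Nat.add_sub_cancel, pow_add, mul_assoc, ← pow_add,
        ← two_mul, pow_mul, neg_one_sq, one_pow, mul_one]
  have hsum : ∑ J ∈ M.powerset, (-1 : ℝ) ^ J.card = if M = ∅ then 1 else 0 := by
    exact_mod_cast Finset.sum_powerset_neg_one_pow_card (x := M)
  rw [Finset.sum_congr rfl hsign, ← Finset.mul_sum, hsum]
  split_ifs <;> simp

section IndepPoly

variable [Fintype E]

noncomputable def closedNbhd (S : E → Finset (Fin n)) (I : Finset E) : Finset E :=
  Finset.univ.filter fun c => ∃ a ∈ I, a = c ∨ Dep S a c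

theorem mem_closedNbhd {I : Finset E} {c : E} :
    c ∈ closedNbhd S I ↔ ∃ a ∈ I, a = c ∨ Dep S a c := by
  simp [closedNbhd]

theorem subset_closedNbhd (I : Finset E) : I ⊆ closedNbhd S I :=
  fun a ha => mem_closedNbhd.2 ⟨a, ha, Or.inl rfl⟩

noncomputable def indepPoly (S : E → Finset (Fin n)) (P : E → ℝ) (U : Finset E) : ℝ :=
  ∑ L ∈ U.powerset.filter (Indep S), (-1 : ℝ) ^ L.card * ∏ b ∈ L, P b

theorem indep_union_iff_of_subset_compl_closedNbhd {I L : Finset E} (hI : Indep S I)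
    (hL : L ⊆ Finset.univ \ closedNbhd S I) : Indep S (L ∪ I) ↔ Indep S L := by
  have hout : ∀ c ∈ L, ∀ a ∈ I, ¬ Dep S a c := fun c hc a ha hdep =>
    (Finset.mem_sdiff.1 (hL hc)).2 (mem_closedNbhd.2 ⟨a, ha, Or.inr hdep⟩)
  refine ⟨fun h => h.mono Finset.subset_union_left, fun h a ha b hb hab => ?_⟩
  rcases Finset.mem_union.1 ha with ha | ha <;> rcases Finset.mem_union.1 hb with hb | hb
  · exact h a ha b hb hab
  · exact fun hdep => hout a ha b hb hdep.symm
  · exact hout b hb a ha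
  · exact hI a ha b hb hab

theorem disjoint_of_subset_compl_closedNbhd {I L : Finset E}
    (hL : L ⊆ Finset.univ \ closedNbhd S I) : Disjoint L I :=
  Finset.disjoint_left.2 fun _ ha haI => (Finset.mem_sdiff.1 (hL ha)).2 (subset_closedNbhd I haI)

theorem sdiff_subset_compl_closedNbhd {I J : Finset E} (hJ : Indep S J) (hIJ : I ⊆ J) :
    J \ I ⊆ Finset.univ \ closedNbhd S I := by
  intro c hc
  obtain ⟨hcJ, hcI⟩ := Finset.mem_sdiff.1 hc
  refine Finset.mem_sdiff.2 ⟨Finset.mem_univ c, fun hcl => ?_⟩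
  obtain ⟨a, haI, rfl | hdep⟩ := mem_closedNbhd.1 hcl
  · exact hcI haI
  · exact hJ a (hIJ haI) c hcJ (fun h => hcI (h ▸ haI)) hdep

/-- The independent supersets of `I` are the sets `L ∪ I` with `L` independent and outside
`closedNbhd S I`. -/
theorem Q_eq_prod_mul_indepPoly (P : E → ℝ) {I : Finset E} (hI : Indep S I) :
    Q S P I = (∏ b ∈ I, P b) * indepPoly S P (Finset.univ \ closedNbhd S I) := by
  rw [indepPoly, Finset.mul_sum, Q]
  symm
  refine Finset.sum_nbij' (· ∪ I) (· \ I) (fun L hL => ?_) (fun J hJ => ?_) (fun L hL => ?_)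
    (fun J hJ => ?_) (fun L hL => ?_)
  all_goals simp only [Finset.mem_filter, Finset.mem_powerset, Finset.mem_univ, true_and] at *
  · exact ⟨Finset.subset_union_right,
      (indep_union_iff_of_subset_compl_closedNbhd hI hL.1).2 hL.2⟩
  · exact ⟨sdiff_subset_compl_closedNbhd hJ.2 hJ.1, hJ.2.mono Finset.sdiff_subset⟩
  · exact Finset.union_sdiff_cancel_right (disjoint_of_subset_compl_closedNbhd hL.1)
  · exact Finset.sdiff_union_of_subset hJ.1
  · have hdisj := disjoint_of_subset_compl_closedNbhd hL.1
    rw [Finset.card_union_of_disjoint hdisj, Nat.add_sub_cancel, Finset.prod_union hdisj]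
    ring

/-- After expanding `Q` and exchanging the sums, the inner sum over `J ⊆ L ∩ A` vanishes unless
`L` misses `A`. -/
theorem sum_Q_eq_indepPoly (P : E → ℝ) (A : Finset E) :
    ∑ J ∈ A.powerset.filter (Indep S), Q S P J = indepPoly S P (Finset.univ \ A) := by
  simp only [Q]
  rw [Finset.sum_comm' (t' := Finset.univ.filter (Indep S)) (s' := fun L => (L ∩ A).powerset)
    (fun J L => by
      simp only [Finset.mem_filter, Finset.mem_powerset, Finset.mem_univ, true_and,
        Finset.subset_inter_iff]
      exact ⟨fun ⟨⟨hJA, _⟩, hJL, hL⟩ => ⟨⟨hJL, hJA⟩, hL⟩,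
        fun ⟨⟨hJL, hJA⟩, hL⟩ => ⟨⟨hJA, hL.mono hJL⟩, hJL, hL⟩⟩)]
  have hsupp : (Finset.univ \ A).powerset.filter (Indep S)
      = (Finset.univ.filter (Indep S)).filter (fun L => Disjoint L A) := by
    ext L
    simp only [Finset.mem_filter, Finset.mem_powerset, Finset.subset_sdiff, Finset.subset_univ,
      true_and, Finset.mem_univ]
    tauto
  simp_rw [← Finset.sum_mul]
  rw [indepPoly, hsupp, Finset.sum_filter (fun L => Disjoint L A)]
  refine Finset.sum_congr rfl fun L _ => ?_
  simp only [sum_powerset_neg_one_pow_sub_card Finset.inter_subset_left,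
    ← Finset.disjoint_iff_inter_eq_empty, ite_mul, zero_mul]

theorem Q_eq_prod_mul_sum_Q (P : E → ℝ) {I : Finset E} (hI : Indep S I) :
    Q S P I = (∏ b ∈ I, P b) * ∑ J ∈ (closedNbhd S I).powerset.filter (Indep S), Q S P J := by
  rw [Q_eq_prod_mul_indepPoly P hI, sum_Q_eq_indepPoly]

end IndepPoly

noncomputable def seqWeight (P : E → ℝ) (ℓ : List (Finset E)) : ℝ :=
  (ℓ.map fun J => ∏ b ∈ J, P b).prod

theorem seqWeight_nonneg {P : E → ℝ} (hP : ∀ b, 0 ≤ P b) (ℓ : List (Finset E)) :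
    0 ≤ seqWeight P ℓ :=
  List.prod_nonneg fun _ hx => by
    obtain ⟨J, -, rfl⟩ := List.mem_map.1 hx
    exact Finset.prod_nonneg fun b _ => hP b

section StableSeqs

variable [Fintype E]

noncomputable def stableSucc (S : E → Finset (Fin n)) (I : Finset E) : Finset (Finset E) :=
  (closedNbhd S I).powerset.filter fun J => J.Nonempty ∧ Indep S J

theorem indep_of_mem_stableSucc {I J : Finset E} (h : J ∈ stableSucc S I) : Indep S J :=
  (Finset.mem_filter.1 h).2.2

theorem Q_div_Q_empty_eq (P : E → ℝ) (hQ : Q S P ∅ ≠ 0) {I : Finset E} (hI : Indep S I) :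
    Q S P I / Q S P ∅ = (∏ b ∈ I, P b) * (1 + ∑ J ∈ stableSucc S I, Q S P J / Q S P ∅) := by
  have hsplit : (closedNbhd S I).powerset.filter (Indep S) = insert ∅ (stableSucc S I) := by
    ext J
    simp only [stableSucc, Finset.mem_insert, Finset.mem_filter, Finset.mem_powerset]
    rcases J.eq_empty_or_nonempty with rfl | hJ
    · simp [indep_empty]
    · simp [hJ, hJ.ne_empty]
  have hempty : ∅ ∉ stableSucc S I := by simp [stableSucc]
  rw [Q_eq_prod_mul_sum_Q P hI, hsplit, Finset.sum_insert hempty, mul_div_assoc, add_div,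
    div_self hQ, Finset.sum_div]

/-- The stable set sequences `[I, I₁, I₂, …]` of length at most `k`, where each term lies in
`stableSucc` of the previous one. -/
noncomputable def stableSeqs (S : E → Finset (Fin n)) : ℕ → Finset E → Finset (List (Finset E))
  | 0, _ => ∅
  | k + 1, I =>
    insert [I] ((stableSucc S I).biUnion fun J => (stableSeqs S k J).image (List.cons I))

theorem head?_eq_of_mem_stableSeqs {k : ℕ} {I : Finset E} {ℓ : List (Finset E)}
    (h : ℓ ∈ stableSeqs S k I) : ℓ.head? = some I := by
  cases k with
  | zero => simp [stableSeqs] at h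
  | succ k =>
    simp only [stableSeqs, Finset.mem_insert, Finset.mem_biUnion, Finset.mem_image] at h
    rcases h with rfl | ⟨J, _, t, _, rfl⟩ <;> rfl

theorem mem_stableSeqs_of_isChain :
    ∀ {ℓ : List (Finset E)} {k : ℕ} {I : Finset E}, ℓ.head? = some I →
      ℓ.IsChain (fun A B => B ∈ stableSucc S A) → ℓ.length ≤ k → ℓ ∈ stableSeqs S k I
  | [], _, _, h, _, _ => by simp at h
  | _ :: _, 0, _, _, _, hl => by simp at hl
  | [_], _ + 1, _, rfl, _, _ => Finset.mem_insert_self _ _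
  | _ :: B :: t, k + 1, _, rfl, hc, hl => by
    obtain ⟨hB, hc⟩ := List.isChain_cons_cons.1 hc
    refine Finset.mem_insert_of_mem (Finset.mem_biUnion.2 ⟨B, hB, Finset.mem_image_of_mem _ ?_⟩)
    exact mem_stableSeqs_of_isChain rfl hc (Nat.le_of_succ_le_succ hl)

theorem sum_stableSeqs_succ (P : E → ℝ) (k : ℕ) (I : Finset E) :
    ∑ ℓ ∈ stableSeqs S (k + 1) I, seqWeight P ℓ
      = (∏ b ∈ I, P b) * (1 + ∑ J ∈ stableSucc S I, ∑ ℓ ∈ stableSeqs S k J, seqWeight P ℓ) := by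
  have hdisj : (stableSucc S I : Set (Finset E)).PairwiseDisjoint
      fun J => (stableSeqs S k J).image (List.cons I) := by
    intro J _ J' _ hne
    refine Finset.disjoint_left.2 fun ℓ h h' => hne ?_
    obtain ⟨t, ht, rfl⟩ := Finset.mem_image.1 h
    obtain ⟨t', ht', heq⟩ := Finset.mem_image.1 h'
    obtain rfl := List.cons_injective heq
    exact Option.some_injective _
      ((head?_eq_of_mem_stableSeqs ht).symm.trans (head?_eq_of_mem_stableSeqs ht'))
  have hsingle : [I] ∉ (stableSucc S I).biUnion fun J => (stableSeqs S k J).image (List.cons I) := by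
    simp only [Finset.mem_biUnion, Finset.mem_image, List.cons.injEq, not_exists, not_and]
    rintro J - t ht - rfl
    exact absurd (head?_eq_of_mem_stableSeqs ht) (by simp)
  rw [stableSeqs, Finset.sum_insert hsingle, Finset.sum_biUnion hdisj, mul_add, Finset.mul_sum]
  simp [Finset.sum_image, seqWeight, Finset.mul_sum]

theorem sum_stableSeqs_le {P : E → ℝ} (hP : ∀ b, 0 ≤ P b) (hSh : Shearer S P) :
    ∀ (k : ℕ) {I : Finset E}, Indep S I →
      ∑ ℓ ∈ stableSeqs S k I, seqWeight P ℓ ≤ Q S P I / Q S P ∅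
  | 0, I, hI => by simpa [stableSeqs] using div_nonneg (hSh.2 I hI) hSh.1.le
  | k + 1, I, hI => by
    rw [sum_stableSeqs_succ, Q_div_Q_empty_eq P hSh.1.ne' hI]
    gcongr with J hJ
    · exact Finset.prod_nonneg fun b _ => hP b
    · exact sum_stableSeqs_le hP hSh k (indep_of_mem_stableSucc hJ)

end StableSeqs

namespace WDag

variable {G G' : WDag n E S}

theorem wellFounded_flip_edge (G : WDag n E S) : WellFounded (flip G.edge) := by
  have : Std.Irrefl (Relation.TransGen (flip G.edge)) :=
    ⟨fun v hv => G.acyclic v (Relation.transGen_swap.mp hv)⟩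
  exact Subrelation.wf Relation.TransGen.single (Finite.wellFounded_of_trans_of_irrefl _)

/-- The length of a longest directed path starting at `v`. -/
noncomputable def depth (G : WDag n E S) : Fin G.size → ℕ :=
  G.wellFounded_flip_edge.fix fun v ih =>
    (Finset.univ.filter (G.edge v)).attach.sup fun w => ih w.1 (Finset.mem_filter.1 w.2).2 + 1

theorem depth_eq (G : WDag n E S) (v : Fin G.size) :
    G.depth v = (Finset.univ.filter (G.edge v)).sup fun w => G.depth w + 1 := by
  conv_rhs => rw [← Finset.sup_attach]
  rw [depth, WellFounded.fix_eq]

theorem depth_lt_of_edge {v w : Fin G.size} (h : G.edge v w) : G.depth w < G.depth v := by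
  rw [depth_eq G v]
  exact Nat.lt_of_succ_le
    (Finset.le_sup (f := fun w => G.depth w + 1) (Finset.mem_filter.2 ⟨Finset.mem_univ w, h⟩))

theorem depth_eq_zero_iff {v : Fin G.size} : G.depth v = 0 ↔ G.IsSink v := by
  refine ⟨fun h w hw => by simpa [h] using depth_lt_of_edge hw, fun h => ?_⟩
  rw [depth_eq, Finset.filter_false_of_mem fun w _ => h w, Finset.sup_empty]
  rfl

theorem exists_edge_depth_eq {v : Fin G.size} {j : ℕ} (h : G.depth v = j + 1) :
    ∃ w, G.edge v w ∧ G.depth w = j := by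
  have hne : (Finset.univ.filter (G.edge v)).Nonempty := by
    by_contra hempty
    rw [Finset.not_nonempty_iff_eq_empty] at hempty
    rw [depth_eq, hempty] at h
    simp at h
  obtain ⟨w, hw, hsup⟩ := Finset.exists_mem_eq_sup _ hne fun w => G.depth w + 1
  rw [depth_eq, hsup] at h
  exact ⟨w, (Finset.mem_filter.1 hw).2, by omega⟩

theorem exists_depth_eq_of_le {v : Fin G.size} {j : ℕ} (h : j ≤ G.depth v) :
    ∃ w, G.depth w = j := by
  induction hd : G.depth v generalizing v with
  | zero => exact ⟨v, by omega⟩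
  | succ d ih =>
    rcases Nat.lt_or_eq_of_le (hd ▸ h) with hlt | rfl
    · obtain ⟨w, -, hw⟩ := exists_edge_depth_eq hd
      exact ih (hw ▸ Nat.le_of_lt_succ hlt) hw
    · exact ⟨v, hd⟩

theorem edge_iff_dep_and_depth_lt (v w : Fin G.size) :
    G.edge v w ↔ Dep S (G.label v) (G.label w) ∧ G.depth w < G.depth v := by
  refine ⟨fun h => ⟨G.edge_dep v w h, depth_lt_of_edge h⟩, fun ⟨hdep, hlt⟩ => ?_⟩
  have hne : v ≠ w := by rintro rfl; omega
  exact (G.dep_edge v w hne hdep).resolve_right fun h => by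
    have := depth_lt_of_edge h; omega

theorem SinkLabeled.singleSink {b : E} (hG : G.SinkLabeled b) : G.SingleSink :=
  let ⟨v, hv, _, huniq⟩ := hG
  ⟨v, hv, huniq⟩

/-- Two nodes at the same depth are not joined by an edge, so if their labels agree, these
labels have no variables, and both nodes are sinks. -/
theorem label_injOn_depth_eq (hG : G.SingleSink) (j : ℕ) :
    Set.InjOn G.label {v | G.depth v = j} := by
  intro u hu v hv hl
  by_contra hne
  have hno_edge : ∀ {x y : Fin G.size}, G.depth x = j → G.depth y = j → ¬ G.edge x y :=
    fun hx hy h => by have := depth_lt_of_edge h; omega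
  by_cases hvars : (S (G.label u)).Nonempty
  · obtain ⟨x, hx⟩ := hvars
    have hdep : Dep S (G.label u) (G.label v) := ⟨x, Finset.mem_inter.2 ⟨hx, hl ▸ hx⟩⟩
    rcases G.dep_edge u v hne hdep with h | h
    · exact hno_edge hu hv h
    · exact hno_edge hv hu h
  · have hsink : ∀ x, G.label x = G.label u → G.IsSink x := fun x hx w hw => hvars <| by
      obtain ⟨y, hy⟩ := G.edge_dep x w hw
      exact ⟨y, hx ▸ (Finset.mem_inter.1 hy).1⟩
    exact hne (hG.unique (hsink u rfl) (hsink v hl.symm))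

noncomputable def layer (G : WDag n E S) (j : ℕ) : Finset E :=
  (Finset.univ.filter fun v => G.depth v = j).image G.label

noncomputable def height (G : WDag n E S) : ℕ :=
  Finset.univ.sup G.depth

theorem mem_layer {j : ℕ} {b : E} : b ∈ G.layer j ↔ ∃ v, G.depth v = j ∧ G.label v = b := by
  simp [layer]

theorem depth_le_height (v : Fin G.size) : G.depth v ≤ G.height :=
  Finset.le_sup (Finset.mem_univ v)

theorem layer_zero {b : E} (hG : G.SinkLabeled b) : G.layer 0 = {b} := by
  obtain ⟨v, hv, hvb, huniq⟩ := hG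
  ext c
  simp only [mem_layer, depth_eq_zero_iff, Finset.mem_singleton]
  exact ⟨fun ⟨w, hw, hwc⟩ => hwc ▸ huniq w hw ▸ hvb, fun hc => ⟨v, hv, hvb.trans hc.symm⟩⟩

theorem indep_layer (G : WDag n E S) (j : ℕ) : Indep S (G.layer j) := by
  intro a ha c hc hac hdep
  obtain ⟨u, hu, rfl⟩ := mem_layer.1 ha
  obtain ⟨v, hv, rfl⟩ := mem_layer.1 hc
  rcases G.dep_edge u v (fun h => hac (h ▸ rfl)) hdep with h | h
  · have := depth_lt_of_edge h; omega
  · have := depth_lt_of_edge h; omega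

theorem layer_succ_subset_closedNbhd [Fintype E] (G : WDag n E S) (j : ℕ) :
    G.layer (j + 1) ⊆ closedNbhd S (G.layer j) := by
  intro c hc
  obtain ⟨v, hv, rfl⟩ := mem_layer.1 hc
  obtain ⟨w, hvw, hw⟩ := exists_edge_depth_eq hv
  exact mem_closedNbhd.2 ⟨G.label w, mem_layer.2 ⟨w, hw, rfl⟩, Or.inr (G.edge_dep v w hvw).symm⟩

theorem layer_nonempty (hG : G.SingleSink) {j : ℕ} (hj : j ≤ G.height) :
    (G.layer j).Nonempty := by
  obtain ⟨v₀, -⟩ := hG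
  obtain ⟨v, -, hv⟩ := Finset.exists_mem_eq_sup Finset.univ ⟨v₀, Finset.mem_univ v₀⟩ G.depth
  obtain ⟨w, hw⟩ := exists_depth_eq_of_le (hv ▸ hj : j ≤ G.depth v)
  exact ⟨G.label w, mem_layer.2 ⟨w, hw, rfl⟩⟩

theorem layer_eq_empty {j : ℕ} (hj : G.height < j) : G.layer j = ∅ :=
  Finset.eq_empty_of_forall_notMem fun _ hc => by
    obtain ⟨v, hv, -⟩ := mem_layer.1 hc
    have := depth_le_height v
    omega

theorem wt_eq_prod_layer (hG : G.SingleSink) (P : E → ℝ) :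
    wt P G = ∏ j ∈ Finset.range (G.height + 1), ∏ b ∈ G.layer j, P b := by
  rw [wt, ← Finset.prod_fiberwise_of_maps_to
    (fun v _ => Finset.mem_range_succ_iff.2 (depth_le_height v))]
  refine Finset.prod_congr rfl fun j _ => ?_
  rw [layer, Finset.prod_image]
  intro u hu v hv
  exact label_injOn_depth_eq hG j (Finset.mem_filter.1 hu).2 (Finset.mem_filter.1 hv).2

/-- A node is determined by its depth and label, and an edge by the depths and labels of its
ends. -/
theorem iso_of_layer_eq (hG : G.SingleSink) (hG' : G'.SingleSink)
    (h : ∀ j, G.layer j = G'.layer j) : Iso G G' := by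
  let pos : Fin G.size → ℕ × E := fun v => (G.depth v, G.label v)
  let pos' : Fin G'.size → ℕ × E := fun v => (G'.depth v, G'.label v)
  have hinj : Function.Injective pos := fun u v huv =>
    label_injOn_depth_eq hG _ (congrArg Prod.fst huv) rfl (congrArg Prod.snd huv)
  have hinj' : Function.Injective pos' := fun u v huv =>
    label_injOn_depth_eq hG' _ (congrArg Prod.fst huv) rfl (congrArg Prod.snd huv)
  have hrange : Set.range pos = Set.range pos' := by
    ext ⟨j, b⟩
    have := congrArg (b ∈ ·) (h j)
    simp only [mem_layer, eq_iff_iff] at this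
    simpa [pos, pos', and_comm] using this
  let e := (Equiv.ofInjective pos hinj).trans
    ((Equiv.setCongr hrange).trans (Equiv.ofInjective pos' hinj').symm)
  have hpos : ∀ v, pos' (e v) = pos v := fun v => Equiv.apply_ofInjective_symm hinj' _
  refine ⟨e, fun v => congrArg Prod.snd (hpos v), fun v w => ?_⟩
  rw [edge_iff_dep_and_depth_lt, edge_iff_dep_and_depth_lt]
  have hd := fun v => congrArg Prod.fst (hpos v)
  have hl := fun v => congrArg Prod.snd (hpos v)
  simp only [pos, pos'] at hd hl
  rw [hd, hd, hl, hl]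

noncomputable def layers (G : WDag n E S) : List (Finset E) :=
  (List.range (G.height + 1)).map G.layer

theorem iso_of_layers_eq (hG : G.SingleSink) (hG' : G'.SingleSink)
    (h : G.layers = G'.layers) : Iso G G' := by
  have hheight : G.height = G'.height := by
    simpa [layers] using congrArg List.length h
  refine iso_of_layer_eq hG hG' fun j => ?_
  rcases le_or_gt j G.height with hj | hj
  · rw [layers, layers, ← hheight, List.map_inj_left] at h
    exact h j (List.mem_range.2 (Nat.lt_succ_of_le hj))
  · rw [layer_eq_empty hj, layer_eq_empty (hheight ▸ hj)]

theorem seqWeight_layers (hG : G.SingleSink) (P : E → ℝ) : seqWeight P G.layers = wt P G := by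
  rw [wt_eq_prod_layer hG, seqWeight, layers, List.map_map, Finset.prod_eq_multiset_prod,
    Finset.range_val, Multiset.range, Multiset.map_coe, Multiset.prod_coe]
  rfl

theorem layers_mem_stableSeqs [Fintype E] {b : E} (hG : G.SinkLabeled b) {k : ℕ}
    (hk : G.height + 1 ≤ k) : G.layers ∈ stableSeqs S k {b} := by
  refine mem_stableSeqs_of_isChain ?_ ?_ (by simpa [layers] using hk)
  · rw [layers, List.range_succ_eq_map, List.map_cons, List.head?_cons, layer_zero hG]
  · rw [layers, List.isChain_map, List.isChain_range_succ]
    intro j hj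
    exact Finset.mem_filter.2 ⟨Finset.mem_powerset.2 (layer_succ_subset_closedNbhd G j),
      layer_nonempty hG.singleSink (Nat.succ_le_of_lt hj), indep_layer G (j + 1)⟩

theorem cwt_nonneg {P : E → ℝ} (hP : ∀ b, 0 ≤ P b) (c : WClass n E S) : 0 ≤ cwt P c :=
  Quotient.inductionOn c fun G => (Finset.prod_nonneg fun _ _ => hP _ : 0 ≤ wt P G)

/-- The set `Γ(b)` of the paper. -/
def sinkClasses (S : E → Finset (Fin n)) (b : E) : Set (WClass n E S) :=
  {c | ∃ G : WDag n E S, Quotient.mk (wdSetoid n E S) G = c ∧ SinkLabeled G b}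

def single (S : E → Finset (Fin n)) (b : E) : WDag n E S where
  size := 1
  label _ := b
  edge _ _ := False
  acyclic _ h := by cases h <;> contradiction
  edge_dep _ _ h := h.elim
  dep_edge v w hvw _ := absurd (Subsingleton.elim v w) hvw

theorem single_sinkLabeled (b : E) : (single S b).SinkLabeled b :=
  ⟨(0 : Fin 1), fun _ h => h, rfl, fun w _ => Subsingleton.elim (α := Fin 1) w 0⟩

theorem ofReal_le_tsum_sinkClasses (P : E → ℝ) (b : E) :
    ENNReal.ofReal (P b) ≤ ∑' τ : sinkClasses S b, ENNReal.ofReal (cwt P τ.1) := by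
  have hmem : Quotient.mk (wdSetoid n E S) (single S b) ∈ sinkClasses S b :=
    ⟨single S b, rfl, single_sinkLabeled b⟩
  convert ENNReal.le_tsum (f := fun τ : sinkClasses S b => ENNReal.ofReal (cwt P τ.1)) ⟨_, hmem⟩
  simp [cwt, wt, single]

/-- Distinct classes in `Γ(b)` have distinct layer sequences, which are stable set sequences
starting at `{b}` of the same weight. -/
theorem tsum_sinkClasses_le [Fintype E] {P : E → ℝ} (hP : ∀ b, 0 ≤ P b) (hSh : Shearer S P)
    (b : E) :
    ∑' τ : sinkClasses S b, ENNReal.ofReal (cwt P τ.1)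
      ≤ ENNReal.ofReal (Q S P {b} / Q S P ∅) := by
  refine ENNReal.summable.tsum_le_of_sum_le fun F => ?_
  choose G hGτ hG using fun τ : sinkClasses S b => τ.2
  have hinj : Set.InjOn (fun τ => (G τ).layers) F := fun τ _ τ' _ h =>
    Subtype.ext (hGτ τ ▸ hGτ τ' ▸
      Quotient.sound (iso_of_layers_eq (hG τ).singleSink (hG τ').singleSink h))
  set k := F.sup fun τ => (G τ).height + 1
  have hsub : F.image (fun τ => (G τ).layers) ⊆ stableSeqs S k {b} := by
    intro ℓ hℓ
    obtain ⟨τ, hτ, rfl⟩ := Finset.mem_image.1 hℓ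
    exact layers_mem_stableSeqs (hG τ) (Finset.le_sup (f := fun τ => (G τ).height + 1) hτ)
  have hweight : ∀ τ, cwt P τ.1 = seqWeight P (G τ).layers := fun τ => by
    rw [← hGτ τ, seqWeight_layers (hG τ).singleSink]
    rfl
  calc ∑ τ ∈ F, ENNReal.ofReal (cwt P τ.1)
      = ENNReal.ofReal (∑ ℓ ∈ F.image fun τ => (G τ).layers, seqWeight P ℓ) := by
        rw [Finset.sum_image hinj, ← ENNReal.ofReal_sum_of_nonneg fun τ _ => ?_]
        · simp only [hweight]
        · exact cwt_nonneg hP _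
    _ ≤ ENNReal.ofReal (∑ ℓ ∈ stableSeqs S k {b}, seqWeight P ℓ) :=
        ENNReal.ofReal_le_ofReal
          (Finset.sum_le_sum_of_subset_of_nonneg hsub fun ℓ _ _ => seqWeight_nonneg hP ℓ)
    _ ≤ ENNReal.ofReal (Q S P {b} / Q S P ∅) :=
        ENNReal.ofReal_le_ofReal (sum_stableSeqs_le hP hSh k (indep_singleton b))

end WDag

theorem stmt10_general {n : ℕ} {E : Type} [Fintype E] (S : E → Finset (Fin n)) (P : E → ℝ)
    (hP0 : ∀ b, 0 < P b)
    (hSh : Shearer S P) :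
    (Fintype.card E : ℝ≥0∞) ≤
      (∑ b : E, ENNReal.ofReal (P b)⁻¹ *
        ∑' τ : {c : WDag.WClass n E S //
          ∃ G : WDag n E S, Quotient.mk (WDag.wdSetoid n E S) G = c ∧ WDag.SinkLabeled G b},
          ENNReal.ofReal (WDag.cwt P τ.1)) ∧
    (∑ b : E, ENNReal.ofReal (P b)⁻¹ *
        ∑' τ : {c : WDag.WClass n E S //
          ∃ G : WDag n E S, Quotient.mk (WDag.wdSetoid n E S) G = c ∧ WDag.SinkLabeled G b},
          ENNReal.ofReal (WDag.cwt P τ.1))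
      ≤ ∑ b : E, ENNReal.ofReal ((Q S P {b} / Q S P ∅) / P b) := by
  have hinv : ∀ b, ENNReal.ofReal (P b)⁻¹ * ENNReal.ofReal (P b) = 1 := fun b => by
    rw [← ENNReal.ofReal_mul (inv_nonneg.2 (hP0 b).le), inv_mul_cancel₀ (hP0 b).ne',
      ENNReal.ofReal_one]
  constructor
  · rw [← Finset.card_univ, Finset.card_eq_sum_ones, Nat.cast_sum, Nat.cast_one]
    exact Finset.sum_le_sum fun b _ =>
      (hinv b).symm.le.trans (mul_le_mul_right (WDag.ofReal_le_tsum_sinkClasses P b) _)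
  · refine Finset.sum_le_sum fun b _ =>
      (mul_le_mul_right (WDag.tsum_sinkClasses_le (fun b => (hP0 b).le) hSh b) _).trans_eq ?_
    rw [← ENNReal.ofReal_mul (inv_nonneg.2 (hP0 b).le), inv_mul_eq_div]

/-- If the probabilities satisfy the Shearer criterion and are
positive, then m ≤ W' ≤ Σ_B μ(B)/P(B). -/
theorem stmt10 {n : ℕ} {E : Type} [Fintype E] (S : E → Finset (Fin n)) (P : E → ℝ)
    (hP0 : ∀ b, 0 < P b) (hP1 : ∀ b, P b ≤ 1)
    (hSh : Shearer S P) :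
    (Fintype.card E : ℝ≥0∞) ≤
      (∑ b : E, ENNReal.ofReal (P b)⁻¹ *
        ∑' τ : {c : WDag.WClass n E S //
          ∃ G : WDag n E S, Quotient.mk (WDag.wdSetoid n E S) G = c ∧ WDag.SinkLabeled G b},
          ENNReal.ofReal (WDag.cwt P τ.1)) ∧
    (∑ b : E, ENNReal.ofReal (P b)⁻¹ *
        ∑' τ : {c : WDag.WClass n E S //
          ∃ G : WDag n E S, Quotient.mk (WDag.wdSetoid n E S) G = c ∧ WDag.SinkLabeled G b},
          ENNReal.ofReal (WDag.cwt P τ.1))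
      ≤ ∑ b : E, ENNReal.ofReal ((Q S P {b} / Q S P ∅) / P b) :=
  stmt10_general S P hP0 hSh

end LLL
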